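/- arXiv:2103.16355 — 2 statements merged into one kernel-verified Lean document; each statement's English description precedes it below -/
import Mathlib

section
/- Let A: ℝ^N → ℝ^N be a nonlinear map such that there exists a nilpotent nonnegative N×N matrix B with |A u − A v| ≤ B |u − v| entrywise for all u, v ∈ ℝ^N (absolute values taken entrywise). Fix z₀ ∈ ℝ^N and define z_{s} = z₀ + A(z_{s-1}) for s ≥ 1. Then the sequence (z_s) is eventually constant; in particular it converges, and its limit z_∞ satisfies z_∞ = z₀ + A(z_∞). -/
theorem forward_iteration_eventually_constant (N : ℕ)
    (A : (Fin N → ℝ) → (Fin N → ℝ)) (B : Matrix (Fin N) (Fin N) ℝ)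
    (hBnn : ∀ i j, 0 ≤ B i j) (s₀ : ℕ) (hs₀ : 0 < s₀) (hnil : B ^ s₀ = 0)
    (hlip : ∀ u v : Fin N → ℝ, ∀ i, |A u i - A v i| ≤ ∑ j, B i j * |u j - v j|)
    (z₀ : Fin N → ℝ) (z : ℕ → Fin N → ℝ)
    (hz0 : z 0 = z₀) (hz : ∀ s : ℕ, z (s + 1) = z₀ + A (z s)) :
    ∃ zinf : Fin N → ℝ, (∃ S : ℕ, ∀ s ≥ S, z s = zinf) ∧
      Filter.Tendsto z Filter.atTop (nhds zinf) ∧ zinf = z₀ + A zinf := by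
  set d0 : Fin N → ℝ := fun j => |z 1 j - z 0 j| with hd0
  have key : ∀ s : ℕ, ∀ i, |z (s + 1) i - z s i| ≤ (Matrix.mulVec (B ^ s) d0) i := by
    intro s
    induction s with
    | zero =>
      intro i
      simp [Matrix.mulVec, dotProduct, hd0, Matrix.one_apply]
    | succ s ih =>
      intro i
      have h1 : z (s + 2) i - z (s + 1) i = A (z (s + 1)) i - A (z s) i := by
        rw [hz (s + 1), hz s]; simp
      rw [h1]
      calc |A (z (s + 1)) i - A (z s) i| ≤ ∑ j, B i j * |z (s + 1) j - z s j| :=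
            hlip _ _ i
        _ ≤ ∑ j, B i j * (Matrix.mulVec (B ^ s) d0) j := by
            apply Finset.sum_le_sum
            intro j _
            exact mul_le_mul_of_nonneg_left (ih j) (hBnn i j)
        _ = (Matrix.mulVec (B ^ (s + 1)) d0) i := by
            rw [pow_succ']
            simp [Matrix.mulVec, dotProduct, Matrix.mul_apply,
              Finset.sum_mul, Finset.mul_sum, mul_assoc]
            rw [Finset.sum_comm]
  have hstep : ∀ s ≥ s₀, z (s + 1) = z s := by
    intro s hs
    funext i
    have hpow : (B : Matrix (Fin N) (Fin N) ℝ) ^ s = 0 := by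
      have : s = s₀ + (s - s₀) := by omega
      rw [this, pow_add, hnil, zero_mul]
    have := key s i
    rw [hpow] at this
    simp only [Matrix.zero_mulVec, Pi.zero_apply] at this
    have := abs_nonpos_iff.mp (le_of_le_of_eq this rfl)
    linarith [sub_eq_zero.mp this]
  have hconst : ∀ s ≥ s₀, z s = z s₀ := by
    intro s hs
    induction s with
    | zero => omega
    | succ s ih =>
      rcases Nat.lt_or_ge s s₀ with h | h
      · have : s + 1 = s₀ := by omega
        rw [this]
      · rw [hstep s h, ih h]
  refine ⟨z s₀, ⟨s₀, hconst⟩, ?_, ?_⟩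
  · exact tendsto_atTop_of_eventually_const hconst
  · have := hz s₀
    rw [hconst (s₀ + 1) (by omega)] at this
    exact this
end

section
/- Let ρ be a probability distribution on ℝ × ℝ^d and suppose C² := E_{(a,w)∼ρ}[a² ‖w‖₁²] < ∞. Let f*(x) = E_{(a,w)∼ρ}[a σ(wᵀx)] for x ∈ [0,1]^d, where σ is ReLU. Let (a_k, w_k), k = 1,…,m, be i.i.d. samples from ρ and define f_m(x) = (1/m) ∑_{k=1}^m a_k σ(w_kᵀ x). Then for any probability distribution D on [0,1]^d, E_{samples} E_{x∼D}[ (f_m(x) − f*(x))² ] ≤ C²/m. -/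
/-! For fixed `x`, the network `f_m(x)` is the empirical mean of `m` i.i.d. copies of
`a σ(wᵀx)`, whose mean is `f*(x)`. By independence its mean squared error is
`Var[a σ(wᵀx)] / m`, and `|σ(wᵀx)| ≤ ‖w‖₁` on `[0,1]^d` bounds that variance by `C²`.
Integrating over `x ∼ D` and exchanging the integrals (Fubini) keeps the bound. -/

open MeasureTheory ProbabilityTheory

section SampleMean

variable {Ω : Type*} [MeasurableSpace Ω] {μ : Measure Ω} [IsProbabilityMeasure μ] {g : Ω → ℝ}

lemma memLp_sampleMean_pi (hg : MemLp g 2 μ) (m : ℕ) :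
    MemLp (fun θ : Fin m → Ω => (1 / (m : ℝ)) * ∑ k, g (θ k)) 2 (Measure.pi fun _ => μ) :=
  (memLp_finsetSum _ fun k _ => hg.comp_measurePreserving (measurePreserving_eval _ k)).const_mul _

lemma integral_sampleMean_pi (hg : Integrable g μ) {m : ℕ} (hm : m ≠ 0) :
    ∫ θ : Fin m → Ω, (1 / (m : ℝ)) * ∑ k, g (θ k) ∂(Measure.pi fun _ => μ) = ∫ p, g p ∂μ := by
  rw [integral_const_mul, integral_finsetSum _ fun k _ => integrable_comp_eval hg]
  simp_rw [integral_comp_eval (μ := fun _ : Fin m => μ) hg.aestronglyMeasurable]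
  simp [hm]

lemma variance_sampleMean_pi (hg : MemLp g 2 μ) (m : ℕ) :
    Var[fun θ : Fin m → Ω => (1 / (m : ℝ)) * ∑ k, g (θ k); Measure.pi fun _ => μ]
      = Var[g; μ] / m := by
  have hindep : iIndepFun (fun k (θ : Fin m → Ω) => g (θ k)) (Measure.pi fun _ => μ) :=
    iIndepFun_pi fun _ => hg.aemeasurable
  rw [variance_const_mul, ← Finset.sum_fn,
    IndepFun.variance_sum (X := fun (k : Fin m) (θ : Fin m → Ω) => g (θ k))
      (fun k _ => hg.comp_measurePreserving (measurePreserving_eval _ k))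
      fun k _ l _ hkl => hindep.indepFun hkl]
  simp_rw [(measurePreserving_eval (fun _ : Fin m => μ) _).variance_fun_comp hg.aemeasurable]
  simp only [Finset.sum_const, Finset.card_univ, Fintype.card_fin, nsmul_eq_mul]
  rcases eq_or_ne m 0 with rfl | hm
  · simp
  · field_simp

lemma integral_sq_sampleMean_sub_integral (hg : MemLp g 2 μ) {m : ℕ} (hm : m ≠ 0) :
    ∫ θ : Fin m → Ω, ((1 / (m : ℝ)) * ∑ k, g (θ k) - ∫ p, g p ∂μ) ^ 2
        ∂(Measure.pi fun _ => μ) = Var[g; μ] / m := by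
  rw [← integral_sampleMean_pi (hg.integrable one_le_two) hm,
    ← variance_eq_integral (memLp_sampleMean_pi hg m).aemeasurable, variance_sampleMean_pi hg]

end SampleMean

lemma integral_integral_le_of_ae_integral_le {α β : Type*} [MeasurableSpace α]
    [MeasurableSpace β] {μ : Measure α} {ν : Measure β} [SFinite μ] [IsProbabilityMeasure ν]
    {F : α → β → ℝ} (hF : Measurable (Function.uncurry F)) (hF0 : ∀ x y, 0 ≤ F x y) {B : ℝ}
    (hB : ∀ᵐ y ∂ν, Integrable (fun x => F x y) μ ∧ ∫ x, F x y ∂μ ≤ B) :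
    ∫ x, ∫ y, F x y ∂ν ∂μ ≤ B := by
  have hnorm : ∀ y, ∫ x, ‖F x y‖ ∂μ = ∫ x, F x y ∂μ := fun y =>
    integral_congr_ae (ae_of_all _ fun x => Real.norm_of_nonneg (hF0 x y))
  have hint : Integrable (Function.uncurry F) (μ.prod ν) := by
    refine (integrable_prod_iff' hF.aestronglyMeasurable).2 ⟨hB.mono fun _ h => h.1, ?_⟩
    refine Integrable.of_bound (hF.norm.stronglyMeasurable.integral_prod_left').aestronglyMeasurable
      B (hB.mono fun y h => ?_)
    simp only [Function.uncurry_apply_pair, hnorm]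
    rw [Real.norm_of_nonneg (integral_nonneg fun x => hF0 x y)]
    exact h.2
  calc ∫ x, ∫ y, F x y ∂ν ∂μ = ∫ y, ∫ x, F x y ∂μ ∂ν := integral_integral_swap hint
    _ ≤ ∫ _, B ∂ν :=
      integral_mono_of_nonneg (ae_of_all _ fun y => integral_nonneg fun x => hF0 x y)
        (integrable_const B) (hB.mono fun _ h => h.2)
    _ = B := by simp

section ReLU

variable {d : ℕ}

def reluUnit (x : Fin d → ℝ) (p : ℝ × (Fin d → ℝ)) : ℝ := p.1 * max (∑ i, p.2 i * x i) 0

lemma continuous_uncurry_reluUnit : Continuous (Function.uncurry (reluUnit (d := d))) := by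
  unfold reluUnit Function.uncurry; fun_prop

lemma abs_max_sum_mul_zero_le_sum_abs {w x : Fin d → ℝ} (hx : ∀ i, |x i| ≤ 1) :
    |max (∑ i, w i * x i) 0| ≤ ∑ i, |w i| := by
  rw [abs_of_nonneg (le_max_right _ _)]
  refine max_le (Finset.sum_le_sum fun i _ => ?_) (Finset.sum_nonneg fun i _ => abs_nonneg _)
  calc w i * x i ≤ |w i| * |x i| := (le_abs_self _).trans (abs_mul _ _).le
    _ ≤ |w i| := mul_le_of_le_one_right (abs_nonneg _) (hx i)

lemma sq_reluUnit_le {x : Fin d → ℝ} (hx : ∀ i, |x i| ≤ 1) (p : ℝ × (Fin d → ℝ)) :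
    reluUnit x p ^ 2 ≤ p.1 ^ 2 * (∑ i, |p.2 i|) ^ 2 := by
  rw [reluUnit, mul_pow, ← sq_abs (max _ _)]
  gcongr
  exact abs_max_sum_mul_zero_le_sum_abs hx

variable {ρ : Measure (ℝ × (Fin d → ℝ))} {x : Fin d → ℝ}

lemma memLp_reluUnit (hx : ∀ i, |x i| ≤ 1)
    (hρ : Integrable (fun p => p.1 ^ 2 * (∑ i, |p.2 i|) ^ 2) ρ) : MemLp (reluUnit x) 2 ρ := by
  have hcont : Continuous (reluUnit x) :=
    continuous_uncurry_reluUnit.comp (continuous_const.prodMk continuous_id)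
  refine (memLp_two_iff_integrable_sq hcont.aestronglyMeasurable).2 <|
    hρ.mono' (hcont.pow 2).aestronglyMeasurable (ae_of_all _ fun p => ?_)
  rw [Real.norm_of_nonneg (sq_nonneg _)]
  exact sq_reluUnit_le hx p

lemma variance_reluUnit_le [IsProbabilityMeasure ρ] (hx : ∀ i, |x i| ≤ 1)
    (hρ : Integrable (fun p => p.1 ^ 2 * (∑ i, |p.2 i|) ^ 2) ρ) :
    Var[reluUnit x; ρ] ≤ ∫ p, p.1 ^ 2 * (∑ i, |p.2 i|) ^ 2 ∂ρ :=
  (variance_le_expectation_sq (memLp_reluUnit hx hρ).aestronglyMeasurable).trans <|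
    integral_mono (memLp_reluUnit hx hρ).integrable_sq hρ (sq_reluUnit_le hx)

end ReLU

theorem monte_carlo_two_layer_approximation (d m : ℕ) (hm : 0 < m)
    (ρ : Measure (ℝ × (Fin d → ℝ))) [IsProbabilityMeasure ρ]
    (C : ℝ) (hC : C ^ 2 = ∫ p, p.1 ^ 2 * (∑ i, |p.2 i|) ^ 2 ∂ρ)
    (hCint : Integrable (fun p => p.1 ^ 2 * (∑ i, |p.2 i|) ^ 2) ρ)
    (fstar : (Fin d → ℝ) → ℝ)
    (hfstar : ∀ x, fstar x = ∫ p, p.1 * max (∑ i, p.2 i * x i) 0 ∂ρ)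
    (D : Measure (Fin d → ℝ)) [IsProbabilityMeasure D]
    (hD : ∀ᵐ x ∂D, ∀ i, x i ∈ Set.Icc (0:ℝ) 1) :
    (∫ θ : Fin m → ℝ × (Fin d → ℝ),
        ∫ x, ((1 / (m : ℝ)) * ∑ k, (θ k).1 * max (∑ i, (θ k).2 i * x i) 0 - fstar x) ^ 2 ∂D
      ∂(Measure.pi fun _ : Fin m => ρ)) ≤ C ^ 2 / m := by
  have hfstar_meas : Measurable fstar := by
    rw [funext hfstar]
    exact continuous_uncurry_reluUnit.stronglyMeasurable.integral_prod_right'.measurable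
  refine integral_integral_le_of_ae_integral_le (by fun_prop) (fun _ _ => sq_nonneg _) ?_
  filter_upwards [hD] with x hx
  have hx' : ∀ i, |x i| ≤ 1 := fun i => abs_le.2 ⟨by linarith [(hx i).1], (hx i).2⟩
  have hg := memLp_reluUnit hx' hCint
  rw [hfstar x]
  refine ⟨((memLp_sampleMean_pi hg m).sub (memLp_const _)).integrable_sq, ?_⟩
  refine (integral_sq_sampleMean_sub_integral hg hm.ne').trans_le ?_
  rw [hC]
  gcongr
  exact variance_reluUnit_le hx' hCint
end
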